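/- Let (R_n)_{n≥0} be a cyclic urn process with m types started with one ball of type 0, and let k, ℓ ∈ {0,…,m−1} satisfy ω^k + ω^ℓ ∉ {0, −1, −2}, ω^{k+ℓ} ≠ −1, and ω^{k+ℓ} ≠ ω^k + ω^ℓ. Then for every n ≥ 0, E[u_k(R_n)·u_ℓ(R_n)] = (1/(ω^{k+ℓ} − ω^k − ω^ℓ)) · ( Γ(n+1+ω^{k+ℓ})/(Γ(n+1)·Γ(ω^{k+ℓ})) − Γ(n+1+ω^k+ω^ℓ)/(Γ(n+1)·Γ(ω^k+ω^ℓ)) ). -/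

import Mathlib

open MeasureTheory ProbabilityTheory Filter Complex Finset Topology

noncomputable section

/-- `ω = exp(2πi/m)`, the `m`-th elementary root of unity. -/
def cw (m : ℕ) : ℂ := Complex.exp (2 * Real.pi * Complex.I / m)

/-- `λ_k = cos(2πk/m)`. -/
def lam (m k : ℕ) : ℝ := Real.cos (2 * Real.pi * k / m)

/-- `μ_k = sin(2πk/m)`. -/
def muim (m k : ℕ) : ℝ := Real.sin (2 * Real.pi * k / m)

/-- the eigenvector `v_k = (1/m)(1, ω^{-k}, …, ω^{-(m-1)k})`. -/
def vvec (m k : ℕ) : Fin m → ℂ :=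
  fun t => (m : ℂ)⁻¹ * cw m ^ (-((k * (t : ℕ) : ℕ) : ℤ))

/-- the dual coefficient `u_k(w) = ∑_t ω^{kt} w_t`. -/
def ucoef (m k : ℕ) (w : Fin m → ℝ) : ℂ :=
  ∑ t : Fin m, cw m ^ (k * (t : ℕ)) * (w t : ℂ)

/-- the replacement matrix `A` of the cyclic urn. -/
def repA (m : ℕ) : Matrix (Fin m) (Fin m) ℝ :=
  Matrix.of fun i j => if (j : ℕ) = ((i : ℕ) + 1) % m then 1 else 0

/-- the filtration `𝓕_n = σ(R_0, …, R_n)`. -/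
def urnFilt {Ω : Type*} [MeasurableSpace Ω] (m : ℕ) (R : ℕ → Ω → Fin m → ℝ) (n : ℕ) :
    MeasurableSpace Ω :=
  ⨆ i ∈ Finset.range (n + 1), MeasurableSpace.comap (R i) inferInstance

/-- A cyclic urn process with `m` types started with one ball of type `j0`. -/
structure IsCyclicUrn {Ω : Type*} [MeasurableSpace Ω] (μ : Measure Ω) (m : ℕ) (j0 : Fin m)
    (R : ℕ → Ω → Fin m → ℝ) : Prop where
  isProb : IsProbabilityMeasure μ
  meas : ∀ n, Measurable (R n)
  natVal : ∀ n ω i, ∃ z : ℕ, R n ω i = z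
  init : ∀ ω, R 0 ω = fun i => if i = j0 then 1 else 0
  step : ∀ n, ∀ j : Fin m,
    μ[Set.indicator {ω | R (n + 1) ω =
        fun i => R n ω i + if (i : ℕ) = ((j : ℕ) + 1) % m then 1 else 0}
      (fun _ => (1 : ℝ)) | urnFilt m R n]
      =ᵐ[μ] fun ω => R n ω j / (n + 1)

/-- componentwise expectation `E[X]` of a random vector. -/
def expVec {Ω : Type*} [MeasurableSpace Ω] (μ : Measure Ω) {m : ℕ}
    (X : Ω → Fin m → ℝ) : Fin m → ℝ := fun i => ∫ ω, X ω i ∂μ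

/-- the martingale `M_{k,n} = (Γ(n+1)/Γ(n+1+ω^k)) u_k(R_n - E[R_n])`, with `M_{k,0} = 0`. -/
def Mart {Ω : Type*} [MeasurableSpace Ω] (μ : Measure Ω) (m k : ℕ)
    (R : ℕ → Ω → Fin m → ℝ) (n : ℕ) (ω : Ω) : ℂ :=
  if n = 0 then 0
  else (Complex.Gamma ((n : ℂ) + 1) / Complex.Gamma ((n : ℂ) + 1 + cw m ^ k)) *
    ucoef m k (fun t => R n ω t - expVec μ (R n) t)

/-- `ν` is the centered Gaussian distribution `𝒩(0, S)` on `ℝ^d` (Cramér–Wold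
characterization: every linear functional is one-dimensional centered Gaussian). -/
def IsCenteredGaussian {d : ℕ} (ν : Measure (Fin d → ℝ)) (S : Matrix (Fin d) (Fin d) ℝ) : Prop :=
  IsProbabilityMeasure ν ∧
  ∀ l : Fin d → ℝ,
    ν.map (fun x => ∑ i, l i * x i) =
      gaussianReal 0 (Real.toNNReal (∑ i, ∑ j, l i * S i j * l j))

/-- convergence in distribution of the random vectors `X_n` to the law `ν`. -/
def TendstoInDist {Ω : Type*} [MeasurableSpace Ω] (μ : Measure Ω) {d : ℕ}
    (X : ℕ → Ω → Fin d → ℝ) (ν : Measure (Fin d → ℝ)) : Prop :=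
  ∀ f : BoundedContinuousFunction (Fin d → ℝ) ℝ,
    Tendsto (fun n => ∫ ω, f (X n ω) ∂μ) atTop (𝓝 (∫ x, f x ∂ν))

/-!
One draw changes `u_a` linearly: drawing a ball of type `j` adds `ω^a ω^{aj}` to `u_a`. Averaging
over `j` with the weights `R_{n,j}/(n+1)`, and using `∑_j R_{n,j} = n+1`, gives the recursions
`E[u_a(R_{n+1})] = (n+1+ω^a)/(n+1) · E[u_a(R_n)]` and
`E[u_k u_ℓ(R_{n+1})] = (n+1+ω^k+ω^ℓ)/(n+1) · E[u_k u_ℓ(R_n)] + ω^{k+ℓ}/(n+1) · E[u_{k+ℓ}(R_n)]`.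
Iterating the factors `(n+1+z)/(n+1)` produces `z(z+1)⋯(z+n)/n! = Γ(n+1+z)/(Γ(n+1)Γ(z))`, and the
inhomogeneous recursion is solved by the difference of two such terms divided by
`ω^{k+ℓ} - ω^k - ω^ℓ`. All expectations are finite sums, since the coordinates of `R_n` are natural
numbers summing to `n+1`.
-/

open Function
open scoped Nat

section Partition

variable {Ω ι E : Type*} [MeasurableSpace Ω] {μ : Measure Ω} [NormedAddCommGroup E]
  {B : ι → Set Ω} {s : Finset ι} {f : Ω → E} {c : ι → E}

theorem ae_eq_sum_indicator_of_pairwise_disjoint (hdisj : Pairwise (Disjoint on B))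
    (hcover : ∀ᵐ ω ∂μ, ∃ i ∈ s, ω ∈ B i) (hf : ∀ i, ∀ ω ∈ B i, f ω = c i) :
    f =ᵐ[μ] fun ω => ∑ i ∈ s, (B i).indicator (fun _ => c i) ω := by
  filter_upwards [hcover] with ω ⟨i, hi, hω⟩
  rw [Finset.sum_eq_single_of_mem i hi fun j _ hji =>
      Set.indicator_of_notMem (Set.disjoint_left.1 (hdisj hji.symm) hω) _,
    Set.indicator_of_mem hω, hf i ω hω]

theorem integrable_of_pairwise_disjoint [IsFiniteMeasure μ] (hB : ∀ i, MeasurableSet (B i))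
    (hdisj : Pairwise (Disjoint on B)) (hcover : ∀ᵐ ω ∂μ, ∃ i ∈ s, ω ∈ B i)
    (hf : ∀ i, ∀ ω ∈ B i, f ω = c i) : Integrable f μ :=
  (integrable_finsetSum s fun i _ => (integrable_const (c i)).indicator (hB i)).congr
    (ae_eq_sum_indicator_of_pairwise_disjoint hdisj hcover hf).symm

theorem integral_eq_sum_of_pairwise_disjoint [NormedSpace ℝ E] [CompleteSpace E]
    [IsFiniteMeasure μ] (hB : ∀ i, MeasurableSet (B i)) (hdisj : Pairwise (Disjoint on B))
    (hcover : ∀ᵐ ω ∂μ, ∃ i ∈ s, ω ∈ B i) (hf : ∀ i, ∀ ω ∈ B i, f ω = c i) :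
    ∫ ω, f ω ∂μ = ∑ i ∈ s, μ.real (B i) • c i := by
  rw [integral_congr_ae (ae_eq_sum_indicator_of_pairwise_disjoint hdisj hcover hf),
    integral_finsetSum s fun i _ => (integrable_const (c i)).indicator (hB i)]
  exact Finset.sum_congr rfl fun i _ => integral_indicator_const (c i) (hB i)

end Partition

def ascPochhammerQuot (z : ℂ) (n : ℕ) : ℂ := (ascPochhammer ℂ (n + 1)).eval z / n !

theorem ascPochhammerQuot_zero (z : ℂ) : ascPochhammerQuot z 0 = z := by
  simp [ascPochhammerQuot]

theorem ascPochhammerQuot_succ (z : ℂ) (n : ℕ) :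
    ascPochhammerQuot z (n + 1) = (n + 1 + z) / (n + 1) * ascPochhammerQuot z n := by
  rw [ascPochhammerQuot, ascPochhammerQuot, ascPochhammer_succ_eval, Nat.factorial_succ]
  push_cast
  field_simp
  ring

theorem Gamma_div_eq_ascPochhammerQuot {z : ℂ} (hz : ∀ k : ℕ, z ≠ -k) (n : ℕ) :
    Gamma (n + 1 + z) / (Gamma (n + 1) * Gamma z) = ascPochhammerQuot z n := by
  rw [ascPochhammerQuot, ← Gamma_add_nat_div_Gamma_eq z hz, Gamma_nat_eq_factorial, mul_comm,
    ← div_div, Nat.cast_succ, add_comm z, add_comm (n : ℂ)]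

theorem ne_neg_natCast_of_norm_le {z : ℂ} {N : ℕ} (hz : ‖z‖ ≤ N) (h : ∀ k ≤ N, z ≠ -k)
    (k : ℕ) : z ≠ -k := by
  rcases le_or_gt k N with hk | hk
  · exact h k hk
  · rintro rfl
    rw [norm_neg, Complex.norm_natCast, Nat.cast_le] at hz
    omega

theorem norm_cw (m : ℕ) : ‖cw m‖ = 1 := by
  simp [cw, Complex.norm_exp]

theorem cw_pow_self (m : ℕ) : cw m ^ m = 1 := by
  rcases Nat.eq_zero_or_pos m with rfl | hm
  · exact pow_zero _
  · exact (Complex.isPrimitiveRoot_exp m hm.ne').pow_eq_one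

theorem cw_pow_mod (m a : ℕ) : cw m ^ (a % m) = cw m ^ a :=
  (pow_eq_pow_mod a (cw_pow_self m)).symm

def addedBall (m : ℕ) (j : Fin m) : Fin m → ℝ :=
  fun i => if (i : ℕ) = ((j : ℕ) + 1) % m then 1 else 0

theorem addedBall_eq_indicator {m : ℕ} (j : Fin m) :
    addedBall m j = fun i => if i = ⟨((j : ℕ) + 1) % m, Nat.mod_lt _ j.pos⟩ then 1 else 0 := by
  ext i
  simp [addedBall, Fin.ext_iff]

theorem addedBall_injective (m : ℕ) : Injective (addedBall m) := by
  intro j j' h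
  have hj := congrFun h ⟨((j : ℕ) + 1) % m, Nat.mod_lt _ j.pos⟩
  simp only [addedBall, if_true, left_eq_ite_iff, one_ne_zero, imp_false, not_not] at hj
  exact Fin.ext ((Nat.ModEq.add_right_cancel' 1 hj).eq_of_lt_of_lt j.isLt j'.isLt)

theorem sum_addedBall {m : ℕ} (j : Fin m) : ∑ i, addedBall m j i = 1 := by
  simp [addedBall_eq_indicator]

theorem ucoef_add (m a : ℕ) (v w : Fin m → ℝ) :
    ucoef m a (v + w) = ucoef m a v + ucoef m a w := by
  simp only [ucoef, Pi.add_apply, Complex.ofReal_add, mul_add, Finset.sum_add_distrib]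

theorem ucoef_indicator {m : ℕ} (a : ℕ) (j : Fin m) :
    ucoef m a (fun i => if i = j then 1 else 0) = cw m ^ (a * j) := by
  simp [ucoef, apply_ite]

theorem ucoef_addedBall {m : ℕ} (a : ℕ) (j : Fin m) :
    ucoef m a (addedBall m j) = cw m ^ a * cw m ^ (a * j) := by
  rw [addedBall_eq_indicator, ucoef_indicator, mul_comm a, pow_mul, cw_pow_mod, ← pow_mul,
    ← pow_add]
  ring_nf

theorem sum_mul_ucoef_add_addedBall {m : ℕ} (a : ℕ) (v : Fin m → ℝ) :
    ∑ j, (v j : ℂ) * ucoef m a (v + addedBall m j) =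
      ((∑ j, v j : ℝ) + cw m ^ a) * ucoef m a v := by
  simp only [ucoef_add, ucoef_addedBall, mul_add, Finset.sum_add_distrib, Complex.ofReal_sum,
    ← Finset.sum_mul, add_mul]
  congr 1
  simp only [ucoef, Finset.mul_sum]
  exact Finset.sum_congr rfl fun j _ => by ring

theorem sum_mul_ucoef_mul_ucoef_add_addedBall {m : ℕ} (k l : ℕ) (v : Fin m → ℝ) :
    ∑ j, (v j : ℂ) * (ucoef m k (v + addedBall m j) * ucoef m l (v + addedBall m j)) =
      ((∑ j, v j : ℝ) + cw m ^ k + cw m ^ l) * (ucoef m k v * ucoef m l v) +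
        cw m ^ (k + l) * ucoef m (k + l) v := by
  have hexpand : ∀ j : Fin m,
      (v j : ℂ) * (ucoef m k (v + addedBall m j) * ucoef m l (v + addedBall m j)) =
        (v j : ℂ) * (ucoef m k v * ucoef m l v) +
          cw m ^ k * ucoef m l v * (cw m ^ (k * j) * v j) +
          cw m ^ l * ucoef m k v * (cw m ^ (l * j) * v j) +
          cw m ^ (k + l) * (cw m ^ ((k + l) * j) * v j) := by
    intro j
    rw [ucoef_add, ucoef_add, ucoef_addedBall, ucoef_addedBall, add_mul k, pow_add, pow_add]
    ring
  simp only [Finset.sum_congr rfl fun j _ => hexpand j, Finset.sum_add_distrib, ← Finset.mul_sum,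
    ← Finset.sum_mul, Complex.ofReal_sum]
  simp only [ucoef]
  ring

section CyclicUrn

variable {Ω : Type*} {m : ℕ} {R : ℕ → Ω → Fin m → ℝ}

def drawEvent (R : ℕ → Ω → Fin m → ℝ) (n : ℕ) (j : Fin m) : Set Ω :=
  {ω | R (n + 1) ω = R n ω + addedBall m j}

theorem pairwise_disjoint_drawEvent (R : ℕ → Ω → Fin m → ℝ) (n : ℕ) :
    Pairwise (Disjoint on drawEvent R n) := fun _ _ hne =>
  Set.disjoint_left.2 fun _ hj hj' =>
    hne (addedBall_injective m (add_left_cancel (hj.symm.trans hj')))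

variable [MeasurableSpace Ω] {μ : Measure Ω} {j0 : Fin m}

theorem measurable_urnFilt (R : ℕ → Ω → Fin m → ℝ) (n : ℕ) :
    Measurable[urnFilt m R n] (R n) :=
  Measurable.of_comap_le (le_iSup₂_of_le n (Finset.self_mem_range_succ n) le_rfl)

namespace IsCyclicUrn

theorem urnFilt_le (hR : IsCyclicUrn μ m j0 R) (n : ℕ) : urnFilt m R n ≤ ‹MeasurableSpace Ω› :=
  iSup₂_le fun i _ => (hR.meas i).comap_le

theorem measurableSet_drawEvent (hR : IsCyclicUrn μ m j0 R) (n : ℕ) (j : Fin m) :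
    MeasurableSet (drawEvent R n j) :=
  measurableSet_eq_fun (hR.meas (n + 1)) ((hR.meas n).add_const _)

theorem condExp_drawEvent (hR : IsCyclicUrn μ m j0 R) (n : ℕ) (j : Fin m) :
    μ[(drawEvent R n j).indicator fun _ => (1 : ℝ) | urnFilt m R n] =ᵐ[μ]
      fun ω => R n ω j / (n + 1) :=
  hR.step n j

theorem measureReal_drawEvent_inter (hR : IsCyclicUrn μ m j0 R) (n : ℕ) (j : Fin m)
    (v : Fin m → ℝ) :
    μ.real (drawEvent R n j ∩ R n ⁻¹' {v}) = v j / (n + 1) * μ.real (R n ⁻¹' {v}) := by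
  have := hR.isProb
  have hle := hR.urnFilt_le n
  have hvF : MeasurableSet[urnFilt m R n] (R n ⁻¹' {v}) :=
    measurable_urnFilt R n (measurableSet_singleton v)
  have hA := hR.measurableSet_drawEvent n j
  calc μ.real (drawEvent R n j ∩ R n ⁻¹' {v})
      = ∫ ω in R n ⁻¹' {v}, (drawEvent R n j).indicator (fun _ => (1 : ℝ)) ω ∂μ := by
        rw [setIntegral_indicator hA, setIntegral_const, smul_eq_mul, mul_one, Set.inter_comm]
    _ = ∫ ω in R n ⁻¹' {v}, R n ω j / (n + 1) ∂μ := by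
        rw [← setIntegral_condExp hle ((integrable_const 1).indicator hA) hvF]
        refine setIntegral_congr_ae (hle _ hvF) ?_
        filter_upwards [hR.condExp_drawEvent n j] with ω h _ using h
    _ = v j / (n + 1) * μ.real (R n ⁻¹' {v}) := by
        rw [setIntegral_congr_fun (hle _ hvF) fun ω (hω : R n ω = v) => by rw [hω],
          setIntegral_const, smul_eq_mul, mul_comm]

theorem sum_measureReal_drawEvent (hR : IsCyclicUrn μ m j0 R) (n : ℕ)
    (hsum : ∀ᵐ ω ∂μ, ∑ i, R n ω i = n + 1) : ∑ j, μ.real (drawEvent R n j) = 1 := by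
  have := hR.isProb
  calc ∑ j, μ.real (drawEvent R n j)
      = ∑ j, ∫ ω, μ[(drawEvent R n j).indicator fun _ => (1 : ℝ) | urnFilt m R n] ω ∂μ := by
        refine Finset.sum_congr rfl fun j _ => ?_
        rw [integral_condExp (hR.urnFilt_le n),
          integral_indicator_const _ (hR.measurableSet_drawEvent n j), smul_eq_mul, mul_one]
    _ = ∫ ω, ∑ j, μ[(drawEvent R n j).indicator fun _ => (1 : ℝ) | urnFilt m R n] ω ∂μ :=
        (integral_finsetSum _ fun _ _ => integrable_condExp).symm
    _ = ∫ _, (1 : ℝ) ∂μ := by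
        refine integral_congr_ae ?_
        filter_upwards [hsum, ae_all_iff.2 (hR.condExp_drawEvent n)] with ω hω hcond
        rw [Finset.sum_congr rfl fun j _ => hcond j, ← Finset.sum_div, hω, div_self (by positivity)]
    _ = 1 := by simp

theorem ae_exists_drawEvent (hR : IsCyclicUrn μ m j0 R) (n : ℕ)
    (hsum : ∀ᵐ ω ∂μ, ∑ i, R n ω i = n + 1) : ∀ᵐ ω ∂μ, ∃ j, ω ∈ drawEvent R n j := by
  have := hR.isProb
  have hA := hR.measurableSet_drawEvent n
  have hunion : μ.real (⋃ j, drawEvent R n j) = 1 := by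
    rw [measureReal_iUnion_fintype (pairwise_disjoint_drawEvent R n) hA,
      hR.sum_measureReal_drawEvent n hsum]
  have hcompl : μ (⋃ j, drawEvent R n j)ᶜ = 0 := by
    rw [← measureReal_eq_zero_iff, measureReal_compl (MeasurableSet.iUnion hA), hunion,
      probReal_univ, sub_self]
  filter_upwards [mem_ae_iff.2 hcompl] with ω hω using Set.mem_iUnion.1 hω

theorem ae_sum_eq (hR : IsCyclicUrn μ m j0 R) (n : ℕ) : ∀ᵐ ω ∂μ, ∑ i, R n ω i = n + 1 := by
  induction n with
  | zero => exact ae_of_all _ fun ω => by simp [hR.init ω]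
  | succ n ih =>
    filter_upwards [ih, hR.ae_exists_drawEvent n ih] with ω hω ⟨j, hj⟩
    rw [show R (n + 1) ω = _ from hj]
    simp only [Pi.add_apply, Finset.sum_add_distrib, hω, sum_addedBall]
    push_cast
    ring

theorem exists_finset_ae_mem (hR : IsCyclicUrn μ m j0 R) (n : ℕ) :
    ∃ S : Finset (Fin m → ℝ), ∀ᵐ ω ∂μ, R n ω ∈ S := by
  refine ⟨(Finset.Nat.antidiagonalTuple m (n + 1)).image fun z i => (z i : ℝ), ?_⟩
  filter_upwards [hR.ae_sum_eq n] with ω hω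
  choose z hz using hR.natVal n ω
  refine Finset.mem_image.2 ⟨z, Finset.Nat.mem_antidiagonalTuple.2 ?_, funext fun i => (hz i).symm⟩
  exact_mod_cast (by simpa only [hz] using hω : ∑ i, (z i : ℝ) = n + 1)

theorem integrable_comp {E : Type*} [NormedAddCommGroup E] (hR : IsCyclicUrn μ m j0 R) (n : ℕ)
    (f : (Fin m → ℝ) → E) : Integrable (fun ω => f (R n ω)) μ := by
  have := hR.isProb
  obtain ⟨S, hS⟩ := hR.exists_finset_ae_mem n
  exact integrable_of_pairwise_disjoint (c := f) (fun v => hR.meas n (measurableSet_singleton v))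
    (pairwise_disjoint_fiber (R n)) (hS.mono fun ω h => ⟨_, h, rfl⟩)
    fun v ω (hω : R n ω = v) => by rw [hω]

theorem integral_comp_succ {E : Type*} [NormedAddCommGroup E] [NormedSpace ℝ E] [CompleteSpace E]
    (hR : IsCyclicUrn μ m j0 R) (n : ℕ) (f : (Fin m → ℝ) → E) :
    ∫ ω, f (R (n + 1) ω) ∂μ =
      ∫ ω, ∑ j, (R n ω j / (n + 1)) • f (R n ω + addedBall m j) ∂μ := by
  have := hR.isProb
  obtain ⟨S, hS⟩ := hR.exists_finset_ae_mem n
  have hfiber (v : Fin m → ℝ) : MeasurableSet (R n ⁻¹' {v}) :=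
    hR.meas n (measurableSet_singleton v)
  -- partition by the current composition `v` and the type `j` of the drawn ball
  let B : (Fin m → ℝ) × Fin m → Set Ω := fun x => drawEvent R n x.2 ∩ R n ⁻¹' {x.1}
  have hdisj : Pairwise (Disjoint on B) := by
    rintro ⟨v, j⟩ ⟨v', j'⟩ hne
    rcases eq_or_ne v v' with rfl | hv
    · exact (pairwise_disjoint_drawEvent R n fun hj => hne (congrArg (Prod.mk v) hj)).mono
        Set.inter_subset_left Set.inter_subset_left
    · exact (pairwise_disjoint_fiber (R n) hv).mono Set.inter_subset_right Set.inter_subset_right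
  have hcover : ∀ᵐ ω ∂μ, ∃ x ∈ S ×ˢ Finset.univ, ω ∈ B x := by
    filter_upwards [hS, hR.ae_exists_drawEvent n (hR.ae_sum_eq n)] with ω hω ⟨j, hj⟩
    exact ⟨(R n ω, j), Finset.mem_product.2 ⟨hω, Finset.mem_univ j⟩, hj, rfl⟩
  have hconst (x : (Fin m → ℝ) × Fin m) (ω : Ω) (hω : ω ∈ B x) :
      f (R (n + 1) ω) = f (x.1 + addedBall m x.2) := by
    obtain ⟨hj, hv : R n ω = x.1⟩ := hω
    rw [show R (n + 1) ω = _ from hj, hv]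
  rw [integral_eq_sum_of_pairwise_disjoint (B := B) (f := fun ω => f (R (n + 1) ω))
      (fun x => (hR.measurableSet_drawEvent n x.2).inter (hfiber x.1)) hdisj hcover hconst,
    integral_eq_sum_of_pairwise_disjoint (s := S)
      (c := fun v => ∑ j, (v j / (n + 1)) • f (v + addedBall m j)) hfiber
      (pairwise_disjoint_fiber (R n)) (hS.mono fun ω h => ⟨_, h, rfl⟩)
      fun v ω (hω : R n ω = v) => by rw [hω],
    Finset.sum_product]
  refine Finset.sum_congr rfl fun v _ => ?_
  rw [Finset.smul_sum]
  refine Finset.sum_congr rfl fun j _ => ?_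
  rw [hR.measureReal_drawEvent_inter, mul_comm, mul_smul]

theorem integral_ucoef_succ (hR : IsCyclicUrn μ m j0 R) (a n : ℕ) :
    ∫ ω, ucoef m a (R (n + 1) ω) ∂μ =
      (n + 1 + cw m ^ a) / (n + 1) * ∫ ω, ucoef m a (R n ω) ∂μ := by
  rw [hR.integral_comp_succ, ← integral_const_mul]
  refine integral_congr_ae ?_
  filter_upwards [hR.ae_sum_eq n] with ω hω
  simp only [Complex.real_smul, Complex.ofReal_div, div_mul_eq_mul_div, ← Finset.sum_div]
  rw [sum_mul_ucoef_add_addedBall, hω]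
  push_cast
  ring

theorem integral_ucoef_mul_ucoef_succ (hR : IsCyclicUrn μ m j0 R) (k l n : ℕ) :
    ∫ ω, ucoef m k (R (n + 1) ω) * ucoef m l (R (n + 1) ω) ∂μ =
      (n + 1 + cw m ^ k + cw m ^ l) / (n + 1) *
          ∫ ω, ucoef m k (R n ω) * ucoef m l (R n ω) ∂μ +
        cw m ^ (k + l) / (n + 1) * ∫ ω, ucoef m (k + l) (R n ω) ∂μ := by
  rw [hR.integral_comp_succ n (fun v => ucoef m k v * ucoef m l v), ← integral_const_mul,
    ← integral_const_mul,
    ← integral_add ((hR.integrable_comp n fun v => ucoef m k v * ucoef m l v).const_mul _)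
      ((hR.integrable_comp n (ucoef m (k + l))).const_mul _)]
  refine integral_congr_ae ?_
  filter_upwards [hR.ae_sum_eq n] with ω hω
  simp only [Complex.real_smul, Complex.ofReal_div, div_mul_eq_mul_div, ← Finset.sum_div]
  rw [sum_mul_ucoef_mul_ucoef_add_addedBall, hω]
  push_cast
  ring

theorem cw_pow_mul_integral_ucoef (hR : IsCyclicUrn μ m j0 R) (a n : ℕ) :
    cw m ^ a * ∫ ω, ucoef m a (R n ω) ∂μ = cw m ^ (a * j0) * ascPochhammerQuot (cw m ^ a) n := by
  have := hR.isProb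
  induction n with
  | zero => simp [hR.init, ucoef_indicator, ascPochhammerQuot_zero, mul_comm]
  | succ n ih =>
    rw [hR.integral_ucoef_succ, ascPochhammerQuot_succ, mul_left_comm, ih]
    ring

theorem sub_mul_integral_ucoef_mul_ucoef (hR : IsCyclicUrn μ m j0 R) (k l n : ℕ) :
    (cw m ^ (k + l) - (cw m ^ k + cw m ^ l)) *
        ∫ ω, ucoef m k (R n ω) * ucoef m l (R n ω) ∂μ =
      cw m ^ ((k + l) * j0) *
        (ascPochhammerQuot (cw m ^ (k + l)) n - ascPochhammerQuot (cw m ^ k + cw m ^ l) n) := by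
  have := hR.isProb
  induction n with
  | zero =>
    simp only [hR.init, ucoef_indicator, ascPochhammerQuot_zero, integral_const, probReal_univ,
      one_smul, add_mul, pow_add]
    ring
  | succ n ih =>
    have hmean := hR.cw_pow_mul_integral_ucoef (k + l) n
    rw [hR.integral_ucoef_mul_ucoef_succ, ascPochhammerQuot_succ, ascPochhammerQuot_succ]
    linear_combination (n + 1 + cw m ^ k + cw m ^ l) / (n + 1) * ih +
      (cw m ^ (k + l) - (cw m ^ k + cw m ^ l)) / (n + 1) * hmean

end IsCyclicUrn

end CyclicUrn

end

theorem stmt11 {Ω : Type*} [MeasurableSpace Ω] (μ : Measure Ω) (m : ℕ) (hm : 2 ≤ m)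
    (R : ℕ → Ω → Fin m → ℝ) (hR : IsCyclicUrn μ m ⟨0, by omega⟩ R)
    (k l : ℕ)
    (h0 : cw m ^ k + cw m ^ l ≠ 0) (h1 : cw m ^ k + cw m ^ l ≠ -1)
    (h2 : cw m ^ k + cw m ^ l ≠ -2) (h3 : cw m ^ (k + l) ≠ -1)
    (h4 : cw m ^ (k + l) ≠ cw m ^ k + cw m ^ l) (n : ℕ) :
    ∫ ω, ucoef m k (R n ω) * ucoef m l (R n ω) ∂μ =
      (cw m ^ (k + l) - cw m ^ k - cw m ^ l)⁻¹ *
        (Complex.Gamma ((n : ℂ) + 1 + cw m ^ (k + l)) /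
            (Complex.Gamma ((n : ℂ) + 1) * Complex.Gamma (cw m ^ (k + l))) -
          Complex.Gamma ((n : ℂ) + 1 + cw m ^ k + cw m ^ l) /
            (Complex.Gamma ((n : ℂ) + 1) * Complex.Gamma (cw m ^ k + cw m ^ l))) := by
  have hp : ∀ j : ℕ, cw m ^ (k + l) ≠ -j :=
    ne_neg_natCast_of_norm_le (N := 1) (by simp [norm_cw]) fun j hj => by
      interval_cases j
      · rw [Nat.cast_zero, neg_zero]
        exact pow_ne_zero _ (Complex.exp_ne_zero _)
      · simpa using h3
  have hs : ∀ j : ℕ, cw m ^ k + cw m ^ l ≠ -j :=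
    ne_neg_natCast_of_norm_le (N := 2)
      ((norm_add_le _ _).trans (by norm_num [norm_cw])) fun j hj => by
      interval_cases j <;> simpa
  rw [add_assoc ((n : ℂ) + 1), Gamma_div_eq_ascPochhammerQuot hp, Gamma_div_eq_ascPochhammerQuot hs,
    sub_sub, eq_inv_mul_iff_mul_eq₀ (sub_ne_zero.2 h4), hR.sub_mul_integral_ucoef_mul_ucoef]
  simp
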